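/- arXiv:1911.11813 — 7 statements merged into one kernel-verified Lean document; each statement's English description precedes it below -/
import Mathlib

section
/- Let X_1,...,X_n take values in the non-negative integers. Then for every positive integer p, E[X_{r:n}^p] = \sum_{m=0}^{\infty} ((m+1)^p - m^p) \sum_{s=0}^{r-1} \sum_{S \subseteq {1,...,n}, |S| = s} P( (\cap_{i \in S} {X_i \le m}) \cap (\cap_{i \notin S} {X_i > m}) ). -/
/-!
`X_{r:n} > m` exactly when fewer than `r` of the `X_i` are `≤ m`, i.e. when the random index set
`{i | X_i ≤ m}` has fewer than `r` elements; splitting this event according to the value `S` of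
that set gives the disjoint events of the right-hand side. The discrete layer-cake formula
`E[g(Y)] = ∑_m (g(m+1) - g(m)) P(Y > m)` for `ℕ`-valued `Y` and `g = (·)^p` then gives the claim.
-/

open MeasureTheory Finset
open scoped ENNReal

/-- The `r`-th order statistic (r-th smallest, `r ∈ {1,...,n}`) of `X_1,...,X_n`. -/
noncomputable def orderStat {Ω : Type*} {n : ℕ} (r : ℕ) (X : Fin n → Ω → ℕ) (ω : Ω) : ℕ :=
  sInf {m | r ≤ (Finset.univ.filter (fun i => X i ω ≤ m)).card}

lemma natCast_comp_eq_tsum_indicator {Ω : Type*} {f : Ω → ℕ} {g : ℕ → ℕ} (hg : Monotone g)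
    (hg0 : g 0 = 0) (ω : Ω) :
    (g (f ω) : ℝ≥0∞) =
      ∑' m : ℕ, {ω' | m < f ω'}.indicator (fun _ => ((g (m + 1) - g m : ℕ) : ℝ≥0∞)) ω := by
  rw [tsum_eq_sum (s := range (f ω)) fun m hm => ?_]
  · rw [sum_congr rfl fun m hm => Set.indicator_of_mem (by simpa using hm) _, ← Nat.cast_sum,
      sum_range_tsub hg, hg0, Nat.sub_zero]
  · exact Set.indicator_of_notMem (by simpa using hm) _

lemma lintegral_natCast_comp_eq_tsum {Ω : Type*} [MeasurableSpace Ω] (μ : Measure Ω)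
    {f : Ω → ℕ} (hf : Measurable f) {g : ℕ → ℕ} (hg : Monotone g) (hg0 : g 0 = 0) :
    ∫⁻ ω, (g (f ω) : ℝ≥0∞) ∂μ = ∑' m : ℕ, ((g (m + 1) - g m : ℕ) : ℝ≥0∞) * μ {ω | m < f ω} := by
  have hmeas (m : ℕ) : MeasurableSet {ω | m < f ω} := hf measurableSet_Ioi
  simp_rw [natCast_comp_eq_tsum_indicator hg hg0]
  rw [lintegral_tsum fun m => (measurable_const.indicator (hmeas m)).aemeasurable]
  simp_rw [lintegral_indicator_const (hmeas _)]

lemma Finset.sum_range_sum_powersetCard_univ {α M : Type*} [Fintype α] [AddCommMonoid M]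
    (r : ℕ) (f : Finset α → M) :
    ∑ s ∈ range r, ∑ S ∈ powersetCard s univ, f S = ∑ S with #S < r, f S := by
  rw [← sum_fiberwise_of_maps_to (g := card) (t := range r) fun S hS => by simpa using hS]
  refine sum_congr rfl fun s hs => sum_congr (ext fun S => ?_) fun _ _ => rfl
  simp only [mem_powersetCard_univ, mem_filter, mem_univ, true_and]
  have := mem_range.1 hs
  omega

lemma Finset.filter_le_eq_iff {ι : Type*} [Fintype ι] (x : ι → ℕ) (m : ℕ) (S : Finset ι) :
    ({i | x i ≤ m} : Finset ι) = S ↔ ∀ i, (i ∈ S → x i ≤ m) ∧ (i ∉ S → m < x i) := by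
  simp only [Finset.ext_iff, mem_filter, mem_univ, true_and]
  refine forall_congr' fun i => ?_
  by_cases hi : i ∈ S <;> simp [hi]

section OrderStat

variable {Ω : Type*} {n : ℕ} (X : Fin n → Ω → ℕ)

lemma lt_orderStat_iff {r : ℕ} (hrn : r ≤ n) (ω : Ω) (m : ℕ) :
    m < orderStat r X ω ↔ #{i | X i ω ≤ m} < r := by
  set s : Set ℕ := {m | r ≤ #{i | X i ω ≤ m}}
  have hmono : ∀ k₁ k₂ : ℕ, k₁ ≤ k₂ → k₁ ∈ s → k₂ ∈ s := fun k₁ k₂ hk h =>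
    h.trans <| card_le_card fun i => by simpa using fun hi : X i ω ≤ k₁ => hi.trans hk
  have hne : s.Nonempty := by
    refine ⟨univ.sup fun i => X i ω, ?_⟩
    rw [Set.mem_ofPred_eq, filter_true_of_mem fun i _ => le_sup (f := fun i => X i ω) (mem_univ i)]
    simpa using hrn
  rw [orderStat, ← not_le, ← Set.mem_Ici, ← Nat.eq_Ici_of_nonempty_of_upward_closed hne hmono]
  simp [s]

lemma measurable_orderStat [MeasurableSpace Ω] (hX : ∀ i, Measurable (X i)) (r : ℕ) :
    Measurable (orderStat r X) :=
  (measurable_of_countable fun x : Fin n → ℕ => orderStat r (fun i (_ : Unit) => x i) ()).comp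
    (measurable_pi_lambda _ hX)

lemma measure_lt_orderStat [MeasurableSpace Ω] (μ : Measure Ω) (hX : ∀ i, Measurable (X i))
    {r : ℕ} (hrn : r ≤ n) (m : ℕ) :
    μ {ω | m < orderStat r X ω} =
      ∑ s ∈ range r, ∑ S ∈ powersetCard s (univ : Finset (Fin n)),
        μ {ω | ∀ i : Fin n, (i ∈ S → X i ω ≤ m) ∧ (i ∉ S → m < X i ω)} := by
  set below : Ω → Finset (Fin n) := fun ω => {i | X i ω ≤ m}
  have hfiber (S : Finset (Fin n)) : MeasurableSet (below ⁻¹' {S}) :=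
    measurable_pi_lambda _ hX
      (Set.to_countable {x : Fin n → ℕ | ({i | x i ≤ m} : Finset (Fin n)) = S}).measurableSet
  have hlt : {ω | m < orderStat r X ω} = below ⁻¹' ↑({S | #S < r} : Finset (Finset (Fin n))) := by
    ext ω
    simp [below, lt_orderStat_iff X hrn]
  simp_rw [hlt, ← sum_measure_preimage_singleton _ fun S _ => hfiber S,
    sum_range_sum_powersetCard_univ, ← filter_le_eq_iff]
  rfl

end OrderStat

theorem stmt2_general {Ω : Type*} [MeasurableSpace Ω] (μ : Measure Ω)
    {n : ℕ} (X : Fin n → Ω → ℕ) (hX : ∀ i, Measurable (X i))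
    (r : ℕ) (hrn : r ≤ n) (p : ℕ) (hp : 1 ≤ p) :
    ∫⁻ ω, ((orderStat r X ω ^ p : ℕ) : ℝ≥0∞) ∂μ
      = ∑' m : ℕ, (((m + 1) ^ p - m ^ p : ℕ) : ℝ≥0∞) *
          ∑ s ∈ Finset.range r, ∑ S ∈ Finset.powersetCard s (Finset.univ : Finset (Fin n)),
            μ {ω | ∀ i : Fin n, (i ∈ S → X i ω ≤ m) ∧ (i ∉ S → m < X i ω)} := by
  rw [lintegral_natCast_comp_eq_tsum μ (measurable_orderStat X hX r) (g := (· ^ p))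
    (pow_left_mono p) (Nat.zero_pow hp)]
  simp_rw [measure_lt_orderStat X μ hX hrn]

theorem stmt2 {Ω : Type*} [MeasurableSpace Ω] (μ : Measure Ω) [IsProbabilityMeasure μ]
    {n : ℕ} (X : Fin n → Ω → ℕ) (hX : ∀ i, Measurable (X i))
    (r : ℕ) (hr : 1 ≤ r) (hrn : r ≤ n) (p : ℕ) (hp : 1 ≤ p) :
    ∫⁻ ω, ((orderStat r X ω ^ p : ℕ) : ℝ≥0∞) ∂μ
      = ∑' m : ℕ, (((m + 1) ^ p - m ^ p : ℕ) : ℝ≥0∞) *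
          ∑ s ∈ Finset.range r, ∑ S ∈ Finset.powersetCard s (Finset.univ : Finset (Fin n)),
            μ {ω | ∀ i : Fin n, (i ∈ S → X i ω ≤ m) ∧ (i ∉ S → m < X i ω)} :=
  stmt2_general μ X hX r hrn p hp
end

section
/- Let X_1,...,X_n take values in the non-negative integers, let p \ge 1, r \le n, and suppose M_0 is a non-negative integer and j_0 an index such that P(X_{j_0} > m) = max_j P(X_j > m) for all m. Then \sum_{m=M_0+1}^{\infty} ((m+1)^p - m^p) P(X_{r:n} > m) \le (\sum_{s=0}^{r-1} \binom{n}{s}) \sum_{x=M_0+2}^{\infty} x^p P(X_{j_0} = x). In particular, if \sum_{x=M_0+2}^{\infty} x^p P(X_{j_0} = x) \le d (\sum_{s=0}^{r-1} \binom{n}{s})^{-1}, then the truncation error in computing E[X_{r:n}^p] by summing only up to m = M_0 is at most d. -/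
open MeasureTheory
open scoped ENNReal

/-- Union bound for the tail of the order statistic. -/
lemma orderStat_tail_le {Ω : Type*} [MeasurableSpace Ω] (μ : Measure Ω)
    {n : ℕ} (X : Fin n → Ω → ℕ)
    (r : ℕ) (hr : 1 ≤ r) (hrn : r ≤ n)
    (j0 : Fin n) (hj0 : ∀ m : ℕ, ∀ j : Fin n, μ {ω | m < X j ω} ≤ μ {ω | m < X j0 ω}) (m : ℕ) :
    μ {ω | m < orderStat r X ω} ≤
      (∑ s ∈ Finset.range r, (n.choose s : ℝ≥0∞)) * μ {ω | m < X j0 ω} := by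
  have hcard : ∀ ω, m < orderStat r X ω →
      (Finset.univ.filter (fun i => X i ω ≤ m)).card < r := by
    intro ω h
    by_contra hc
    push_neg at hc
    have := Nat.sInf_le (s := {m | r ≤ (Finset.univ.filter (fun i => X i ω ≤ m)).card}) hc
    unfold orderStat at h
    omega
  rcases eq_or_lt_of_le hr with h1 | h2
  · -- r = 1
    have hsub : {ω | m < orderStat r X ω} ⊆ {ω | m < X j0 ω} := by
      intro ω h
      have := hcard ω h
      rw [← h1] at this
      have h0 : (Finset.univ.filter (fun i => X i ω ≤ m)).card = 0 := by omega
      rw [Finset.card_eq_zero, Finset.filter_eq_empty_iff] at h0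
      simpa using not_le.mp (h0 (Finset.mem_univ j0))
    calc μ {ω | m < orderStat r X ω} ≤ μ {ω | m < X j0 ω} := measure_mono hsub
    _ ≤ _ := by
        rw [← h1]
        simp [le_mul_iff_one_le_left]
  · -- r ≥ 2
    have hsub : {ω | m < orderStat r X ω} ⊆ ⋃ i : Fin n, {ω | m < X i ω} := by
      intro ω h
      have hc := hcard ω h
      simp only [Set.mem_iUnion, Set.mem_setOf_eq]
      by_contra hall
      push_neg at hall
      have : (Finset.univ.filter (fun i => X i ω ≤ m)) = Finset.univ := by
        rw [Finset.filter_eq_self]; intro i _; exact hall i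
      rw [this, Finset.card_univ, Fintype.card_fin] at hc
      omega
    have h1 : μ {ω | m < orderStat r X ω} ≤ ∑ i : Fin n, μ {ω | m < X i ω} :=
      (measure_mono hsub).trans (measure_iUnion_fintype_le _ _)
    have h2' : (∑ i : Fin n, μ {ω | m < X i ω}) ≤ n * μ {ω | m < X j0 ω} := by
      calc ∑ i : Fin n, μ {ω | m < X i ω} ≤ ∑ _i : Fin n, μ {ω | m < X j0 ω} :=
            Finset.sum_le_sum fun i _ => hj0 m i
      _ = n * μ {ω | m < X j0 ω} := by simp [Finset.sum_const, nsmul_eq_mul]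
    refine (h1.trans h2').trans (mul_le_mul_left ?_ _)
    calc (n : ℝ≥0∞) ≤ (n.choose 0 : ℝ≥0∞) + (n.choose 1 : ℝ≥0∞) := by simp
    _ ≤ _ := by
        have : ({0, 1} : Finset ℕ) ⊆ Finset.range r := by
          intro x hx; simp at hx; rcases hx with h | h <;> simp [h] <;> omega
        calc (n.choose 0 : ℝ≥0∞) + (n.choose 1 : ℝ≥0∞)
            = ∑ s ∈ ({0,1} : Finset ℕ), (n.choose s : ℝ≥0∞) := by simp
        _ ≤ _ := Finset.sum_le_sum_of_subset this

/-- Rearrangement: the weighted tail sum is bounded by the truncated moment sum. -/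
lemma tail_moment_le {Ω : Type*} [MeasurableSpace Ω] (μ : Measure Ω) (Y : Ω → ℕ)
    (hY : Measurable Y) (M0 p : ℕ) :
    (∑' m : ℕ, (((M0 + 1 + m + 1) ^ p - (M0 + 1 + m) ^ p : ℕ) : ℝ≥0∞) * μ {ω | M0 + 1 + m < Y ω})
      ≤ ∑' x : ℕ, ((M0 + 2 + x : ℕ) : ℝ≥0∞) ^ p * μ {ω | Y ω = M0 + 2 + x} := by
  have tail : ∀ M : ℕ, μ {ω | M < Y ω} = ∑' x : ℕ, μ {ω | Y ω = M + 1 + x} := by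
    intro M
    have h1 : {ω | M < Y ω} = ⋃ x : ℕ, {ω | Y ω = M + 1 + x} := by
      ext ω; simp only [Set.mem_setOf_eq, Set.mem_iUnion]
      constructor
      · intro h; exact ⟨Y ω - (M+1), by omega⟩
      · rintro ⟨x, hx⟩; omega
    rw [h1, measure_iUnion]
    · intro i j hij
      simp only [Function.onFun, Set.disjoint_left, Set.mem_setOf_eq]
      intro ω h1 h2; omega
    · intro x; exact hY (measurableSet_singleton _)
  set q : ℕ → ℝ≥0∞ := fun k => μ {ω | Y ω = M0 + 2 + k} with hq
  set c : ℕ → ℝ≥0∞ := fun m => (((M0 + 1 + m + 1) ^ p - (M0 + 1 + m) ^ p : ℕ) : ℝ≥0∞) with hc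
  set g : ℕ → ℕ → ℝ≥0∞ := fun m k => if m ≤ k then c m * q k else 0 with hg
  have step1 : ∀ m : ℕ, c m * μ {ω | M0 + 1 + m < Y ω} = ∑' k : ℕ, g m k := by
    intro m
    rw [tail, ← ENNReal.tsum_mul_left]
    have inj : Function.Injective (fun x : ℕ => m + x) := fun a b h => by
      simp only [] at h; omega
    rw [← Function.Injective.tsum_eq inj (f := g m)]
    · refine tsum_congr fun x => ?_
      simp only [hg]
      rw [if_pos (by omega : m ≤ m + x)]
      congr 2
      ext ω; simp only [Set.mem_setOf_eq]; omega
    · intro k hk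
      simp only [Function.mem_support, hg] at hk
      by_contra hmem
      simp only [Set.mem_range] at hmem
      have : ¬ m ≤ k := by
        intro hle; exact hmem ⟨k - m, by omega⟩
      rw [if_neg this] at hk; exact hk rfl
  calc (∑' m : ℕ, c m * μ {ω | M0 + 1 + m < Y ω}) = ∑' m : ℕ, ∑' k : ℕ, g m k :=
        tsum_congr step1
    _ = ∑' k : ℕ, ∑' m : ℕ, g m k := ENNReal.tsum_comm
    _ ≤ ∑' k : ℕ, ((M0 + 2 + k : ℕ) : ℝ≥0∞) ^ p * q k := by
        refine ENNReal.tsum_le_tsum fun k => ?_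
        have hfin : ∑' m : ℕ, g m k = ∑ m ∈ Finset.range (k+1), c m * q k := by
          rw [tsum_eq_sum (s := Finset.range (k+1))]
          · exact Finset.sum_congr rfl fun m hm => by
              simp only [hg]; rw [if_pos (by simp at hm; omega)]
          · intro m hm
            simp only [hg]; rw [if_neg (by simp at hm; omega)]
        rw [hfin, ← Finset.sum_mul]
        refine mul_le_mul_left ?_ _
        have htel : ∑ m ∈ Finset.range (k+1), ((M0 + 1 + m + 1) ^ p - (M0 + 1 + m) ^ p : ℕ)
            = (M0 + 1 + (k+1)) ^ p - (M0 + 1) ^ p := by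
          have := Finset.sum_range_tsub (f := fun i => (M0 + 1 + i) ^ p)
            (fun a b hab => Nat.pow_le_pow_left (by omega) p) (k+1)
          simp only [add_zero] at this
          rw [← this]
          exact Finset.sum_congr rfl fun m _ => by
            rw [show M0 + 1 + (m+1) = M0 + 1 + m + 1 by omega]
        calc ∑ m ∈ Finset.range (k+1), c m
            = (((M0 + 1 + (k+1)) ^ p - (M0 + 1) ^ p : ℕ) : ℝ≥0∞) := by
              rw [hc, ← Nat.cast_sum, htel]
          _ ≤ (((M0 + 2 + k) ^ p : ℕ) : ℝ≥0∞) := by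
              rw [show M0 + 1 + (k+1) = M0 + 2 + k by omega]
              exact Nat.cast_le.mpr (Nat.sub_le _ _)
          _ = ((M0 + 2 + k : ℕ) : ℝ≥0∞) ^ p := by push_cast; ring

theorem stmt7 {Ω : Type*} [MeasurableSpace Ω] (μ : Measure Ω) [IsProbabilityMeasure μ]
    {n : ℕ} (X : Fin n → Ω → ℕ) (hX : ∀ i, Measurable (X i))
    (r : ℕ) (hr : 1 ≤ r) (hrn : r ≤ n) (p : ℕ) (hp : 1 ≤ p) (M0 : ℕ)
    (j0 : Fin n) (hj0 : ∀ m : ℕ, ∀ j : Fin n, μ {ω | m < X j ω} ≤ μ {ω | m < X j0 ω})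
    (d : ℝ≥0∞) (hd : 0 < d) :
    (∑' m : ℕ, (((M0 + 1 + m + 1) ^ p - (M0 + 1 + m) ^ p : ℕ) : ℝ≥0∞) *
        μ {ω | M0 + 1 + m < orderStat r X ω})
      ≤ (∑ s ∈ Finset.range r, (n.choose s : ℝ≥0∞)) *
          ∑' x : ℕ, ((M0 + 2 + x : ℕ) : ℝ≥0∞) ^ p * μ {ω | X j0 ω = M0 + 2 + x}
    ∧ ((∑' x : ℕ, ((M0 + 2 + x : ℕ) : ℝ≥0∞) ^ p * μ {ω | X j0 ω = M0 + 2 + x}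
          ≤ d * (∑ s ∈ Finset.range r, (n.choose s : ℝ≥0∞))⁻¹) →
        (∑' m : ℕ, (((M0 + 1 + m + 1) ^ p - (M0 + 1 + m) ^ p : ℕ) : ℝ≥0∞) *
            μ {ω | M0 + 1 + m < orderStat r X ω}) ≤ d) := by
  set K : ℝ≥0∞ := ∑ s ∈ Finset.range r, (n.choose s : ℝ≥0∞) with hK
  have hmain : (∑' m : ℕ, (((M0 + 1 + m + 1) ^ p - (M0 + 1 + m) ^ p : ℕ) : ℝ≥0∞) *
        μ {ω | M0 + 1 + m < orderStat r X ω})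
      ≤ K * ∑' x : ℕ, ((M0 + 2 + x : ℕ) : ℝ≥0∞) ^ p * μ {ω | X j0 ω = M0 + 2 + x} := by
    calc (∑' m : ℕ, (((M0 + 1 + m + 1) ^ p - (M0 + 1 + m) ^ p : ℕ) : ℝ≥0∞) *
          μ {ω | M0 + 1 + m < orderStat r X ω})
        ≤ ∑' m : ℕ, K * ((((M0 + 1 + m + 1) ^ p - (M0 + 1 + m) ^ p : ℕ) : ℝ≥0∞) *
            μ {ω | M0 + 1 + m < X j0 ω}) := by
          refine ENNReal.tsum_le_tsum fun m => ?_
          rw [← mul_assoc, mul_comm K, mul_assoc]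
          exact mul_le_mul_right (orderStat_tail_le μ X r hr hrn j0 hj0 (M0 + 1 + m)) _
      _ = K * ∑' m : ℕ, (((M0 + 1 + m + 1) ^ p - (M0 + 1 + m) ^ p : ℕ) : ℝ≥0∞) *
            μ {ω | M0 + 1 + m < X j0 ω} := ENNReal.tsum_mul_left
      _ ≤ K * ∑' x : ℕ, ((M0 + 2 + x : ℕ) : ℝ≥0∞) ^ p * μ {ω | X j0 ω = M0 + 2 + x} :=
          mul_le_mul_right (tail_moment_le μ (X j0) (hX j0) M0 p) _
  refine ⟨hmain, fun h => ?_⟩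
  have hK0 : K ≠ 0 := by
    have : (1 : ℝ≥0∞) ≤ K := by
      rw [hK]
      calc (1 : ℝ≥0∞) = ∑ s ∈ ({0} : Finset ℕ), (n.choose s : ℝ≥0∞) := by simp
      _ ≤ _ := Finset.sum_le_sum_of_subset (by intro x hx; simp at hx; simp [hx]; omega)
    intro h0; rw [h0] at this; simpa using this
  have hKtop : K ≠ ⊤ := by
    rw [hK]
    exact (ENNReal.sum_lt_top.mpr fun s _ => ENNReal.natCast_lt_top _).ne
  calc (∑' m : ℕ, (((M0 + 1 + m + 1) ^ p - (M0 + 1 + m) ^ p : ℕ) : ℝ≥0∞) *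
        μ {ω | M0 + 1 + m < orderStat r X ω})
      ≤ K * (d * K⁻¹) := hmain.trans (mul_le_mul_right h _)
    _ = d * (K * K⁻¹) := by ring
    _ = d := by rw [ENNReal.mul_inv_cancel hK0 hKtop, mul_one]
end

section
/- Let X have a Poisson distribution with parameter \lambda > 0, and let p \ge 1 and M_0 \ge p - 2 be integers. Then \sum_{x=M_0+2}^{\infty} x^p P(X = x) \le 2^{p(p-1)/2} \lambda^p P(X > M_0 + 1 - p). -/
/-- Poisson probability mass function with parameter `lam`. -/
noncomputable def poissonPMFval (lam : ℝ) (x : ℕ) : ℝ :=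
  Real.exp (-lam) * lam ^ x / x.factorial

lemma pois_nonneg (lam : ℝ) (hl : 0 < lam) (x : ℕ) : 0 ≤ poissonPMFval lam x := by
  unfold poissonPMFval
  positivity

lemma pois_summable (lam : ℝ) : Summable (poissonPMFval lam) := by
  unfold poissonPMFval
  simpa [mul_div_assoc] using (Real.summable_pow_div_factorial lam).mul_left (Real.exp (-lam))

lemma pois_succ (lam : ℝ) (x : ℕ) :
    ((x + 1 : ℕ) : ℝ) * poissonPMFval lam (x + 1) = lam * poissonPMFval lam x := by
  unfold poissonPMFval
  rw [Nat.factorial_succ]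
  have h1 : ((x : ℝ) + 1) ≠ 0 := by positivity
  have h2 : ((x.factorial : ℝ)) ≠ 0 := by positivity
  push_cast
  field_simp
  ring

lemma keyA (lam : ℝ) (hl : 0 < lam) : ∀ p x : ℕ, p ≤ x →
    (x : ℝ) ^ p * poissonPMFval lam x
      ≤ 2 ^ (p * (p - 1) / 2) * lam ^ p * poissonPMFval lam (x - p) := by
  intro p
  induction p with
  | zero => intro x hx; simp
  | succ p ih =>
    intro x hx
    obtain ⟨y, rfl⟩ : ∃ y, x = y + 1 := ⟨x - 1, by omega⟩
    have hpy : p ≤ y := by omega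
    have hpoisy : 0 ≤ poissonPMFval lam y := pois_nonneg lam hl y
    have hpow : ((y + 1 : ℕ) : ℝ) ^ p ≤ 2 ^ p * (y : ℝ) ^ p := by
      rcases Nat.eq_zero_or_pos p with hp0 | hp0
      · simp [hp0]
      · have hy : (1 : ℝ) ≤ (y : ℝ) := by exact_mod_cast Nat.one_le_iff_ne_zero.mpr (by omega)
        calc ((y + 1 : ℕ) : ℝ) ^ p ≤ (2 * (y : ℝ)) ^ p := by
              apply pow_le_pow_left₀ (by positivity)
              push_cast; linarith
          _ = 2 ^ p * (y : ℝ) ^ p := mul_pow _ _ _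
    have h1 : ((y + 1 : ℕ) : ℝ) ^ (p + 1) * poissonPMFval lam (y + 1)
        = ((y + 1 : ℕ) : ℝ) ^ p * (lam * poissonPMFval lam y) := by
      rw [← pois_succ lam y]; ring
    have step1 : ((y + 1 : ℕ) : ℝ) ^ (p + 1) * poissonPMFval lam (y + 1)
        ≤ 2 ^ p * lam * ((y : ℝ) ^ p * poissonPMFval lam y) := by
      rw [h1]
      calc ((y + 1 : ℕ) : ℝ) ^ p * (lam * poissonPMFval lam y)
          ≤ (2 ^ p * (y : ℝ) ^ p) * (lam * poissonPMFval lam y) :=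
            mul_le_mul_of_nonneg_right hpow (by positivity)
        _ = 2 ^ p * lam * ((y : ℝ) ^ p * poissonPMFval lam y) := by ring
    have step2 : (2 : ℝ) ^ p * lam * ((y : ℝ) ^ p * poissonPMFval lam y)
        ≤ 2 ^ p * lam * (2 ^ (p * (p - 1) / 2) * lam ^ p * poissonPMFval lam (y - p)) :=
      mul_le_mul_of_nonneg_left (ih y hpy) (by positivity)
    have hexp : p + p * (p - 1) / 2 = (p + 1) * ((p + 1) - 1) / 2 := by
      rcases p with _ | q
      · simp
      · obtain ⟨k, hk⟩ := Nat.even_mul_succ_self q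
        have hA : (q + 1) * q = q * (q + 1) := by ring
        have hmul : (q + 1 + 1) * (q + 1) = q * (q + 1) + 2 * (q + 1) := by ring
        simp only [Nat.succ_sub_one]
        omega
    have hsub : y + 1 - (p + 1) = y - p := by omega
    calc ((y + 1 : ℕ) : ℝ) ^ (p + 1) * poissonPMFval lam (y + 1)
        ≤ 2 ^ p * lam * (2 ^ (p * (p - 1) / 2) * lam ^ p * poissonPMFval lam (y - p)) :=
          step1.trans step2
      _ = 2 ^ (p + p * (p - 1) / 2) * lam ^ (p + 1) * poissonPMFval lam (y - p) := by
          rw [pow_add, pow_succ]; ring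
      _ = 2 ^ ((p + 1) * ((p + 1) - 1) / 2) * lam ^ (p + 1) * poissonPMFval lam (y + 1 - (p + 1)) := by
          rw [hexp, hsub]

theorem stmt9 (lam : ℝ) (hlam : 0 < lam) (p M0 : ℕ) (hp : 1 ≤ p)
    (hM0 : (p : ℤ) - 2 ≤ (M0 : ℤ)) :
    ∑' x : ℕ, ((M0 + 2 + x : ℕ) : ℝ) ^ p * poissonPMFval lam (M0 + 2 + x)
      ≤ 2 ^ (p * (p - 1) / 2) * lam ^ p *
        ∑' x : ℕ, if (M0 : ℤ) + 1 - (p : ℤ) < (x : ℤ) then poissonPMFval lam x else 0 := by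
  have hpM : p ≤ M0 + 2 := by omega
  set C : ℝ := 2 ^ (p * (p - 1) / 2) * lam ^ p with hC
  have hC0 : 0 ≤ C := by positivity
  set K : ℕ := M0 + 2 - p with hK
  have hcond : ∀ x : ℕ, ((M0 : ℤ) + 1 - (p : ℤ) < (x : ℤ)) ↔ K ≤ x := by
    intro x; omega
  have hinj : Function.Injective (fun n : ℕ => K + n) := fun a b h => by
    simpa using h
  have hg : Summable (fun n : ℕ => poissonPMFval lam (K + n)) :=
    (pois_summable lam).comp_injective hinj
  -- rewrite RHS indicator sum as shifted sum
  have hRHS : (∑' x : ℕ, if (M0 : ℤ) + 1 - (p : ℤ) < (x : ℤ) then poissonPMFval lam x else 0)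
      = ∑' n : ℕ, poissonPMFval lam (K + n) := by
    have hsupp : Function.support (fun x : ℕ => if K ≤ x then poissonPMFval lam x else 0)
        ⊆ Set.range (fun n : ℕ => K + n) := by
      intro x hx
      simp only [Function.mem_support, ne_eq, ite_eq_right_iff, not_forall] at hx
      obtain ⟨h, -⟩ := hx
      exact ⟨x - K, by simp; omega⟩
    have h1 : (∑' n : ℕ, if K ≤ K + n then poissonPMFval lam (K + n) else 0)
        = ∑' x : ℕ, if K ≤ x then poissonPMFval lam x else 0 := hinj.tsum_eq hsupp
    simp only [hcond]
    rw [← h1]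
    exact tsum_congr fun n => by rw [if_pos (Nat.le_add_right K n)]
  -- termwise bound
  have hterm : ∀ n : ℕ, ((M0 + 2 + n : ℕ) : ℝ) ^ p * poissonPMFval lam (M0 + 2 + n)
      ≤ C * poissonPMFval lam (K + n) := by
    intro n
    have h := keyA lam hlam p (M0 + 2 + n) (by omega)
    have hsub : M0 + 2 + n - p = K + n := by omega
    rwa [hsub] at h
  have hnonneg : ∀ n : ℕ, 0 ≤ ((M0 + 2 + n : ℕ) : ℝ) ^ p * poissonPMFval lam (M0 + 2 + n) := by
    intro n
    exact mul_nonneg (by positivity) (pois_nonneg lam hlam _)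
  have hgC : Summable (fun n : ℕ => C * poissonPMFval lam (K + n)) := hg.mul_left C
  have hLHSsum : Summable (fun n : ℕ => ((M0 + 2 + n : ℕ) : ℝ) ^ p * poissonPMFval lam (M0 + 2 + n)) :=
    Summable.of_nonneg_of_le hnonneg hterm hgC
  calc (∑' x : ℕ, ((M0 + 2 + x : ℕ) : ℝ) ^ p * poissonPMFval lam (M0 + 2 + x))
      ≤ ∑' n : ℕ, C * poissonPMFval lam (K + n) := Summable.tsum_le_tsum hterm hLHSsum hgC
    _ = C * ∑' n : ℕ, poissonPMFval lam (K + n) := tsum_mul_left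
    _ = C * ∑' x : ℕ, if (M0 : ℤ) + 1 - (p : ℤ) < (x : ℤ) then poissonPMFval lam x else 0 := by
        rw [hRHS]
end

section
/- Let X have a negative binomial distribution NBin(R, p) with R > 0 and p \in (0,1), i.e. P(X=x) = \Gamma(x+R)/(x! \Gamma(R)) (1-p)^x p^R for x = 0,1,2,.... Let q \ge 1 and M_0 \ge q - 2 be integers. Then \sum_{x=M_0+2}^{\infty} x^q P(X = x) \le 2^{q(q-1)/2} R(R+1)\cdots(R+q-1) ((1-p)/p)^q P(\tilde X > M_0 + 1 - q), where \tilde X ~ NBin(R+q, p). -/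
/-- Negative binomial probability mass function `NBin(R, p)`:
`P(X = x) = Γ(x+R)/(x! Γ(R)) (1-p)^x p^R`. -/
noncomputable def nbinPMFval (R p : ℝ) (x : ℕ) : ℝ :=
  Real.Gamma (x + R) / (x.factorial * Real.Gamma R) * (1 - p) ^ x * p ^ R

/-!
Writing `x^{(q)} = x (x-1) ⋯ (x-q+1)` for the falling factorial, the negative binomial weights
satisfy `x^{(q)} P_R(x) = R (R+1) ⋯ (R+q-1) ((1-p)/p)^q P_{R+q}(x-q)`, obtained by iterating
`x P_R(x) = R ((1-p)/p) P_{R+1}(x-1)`. Since `x - i ≥ x / 2^i` for `i < x`, we have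
`x^q ≤ 2^{q(q-1)/2} x^{(q)}` once `x ≥ q`; summing over `x ≥ M₀ + 2 ≥ q` and reindexing by
`x ↦ x - q` gives the tail of `NBin(R+q, p)` beyond `M₀ + 1 - q`.
-/

open Finset Filter Topology

namespace Nat

theorem le_two_pow_mul_sub {x i : ℕ} (hi : i < x) : x ≤ 2 ^ i * (x - i) := by
  have h2i : i + 1 ≤ 2 ^ i := i.lt_two_pow_self
  obtain ⟨y, rfl⟩ : ∃ y, x = i + 1 + y := ⟨x - (i + 1), by omega⟩
  rw [show i + 1 + y - i = y + 1 by omega]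
  nlinarith

theorem pow_le_two_pow_mul_descFactorial {q x : ℕ} (hqx : q ≤ x) :
    x ^ q ≤ 2 ^ (q * (q - 1) / 2) * x.descFactorial q := by
  calc x ^ q = ∏ _i ∈ range q, x := by rw [prod_const, card_range]
    _ ≤ ∏ i ∈ range q, 2 ^ i * (x - i) :=
        prod_le_prod' fun i hi => le_two_pow_mul_sub (by simp at hi; omega)
    _ = 2 ^ (q * (q - 1) / 2) * x.descFactorial q := by
        rw [prod_mul_distrib, prod_pow_eq_pow_sum, sum_range_id, descFactorial_eq_prod_range]

end Nat

section NegativeBinomial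

variable {R p : ℝ}

theorem nbinPMFval_pos (hR : 0 < R) (hp0 : 0 < p) (hp1 : p < 1) (x : ℕ) :
    0 < nbinPMFval R p x := by
  have hΓx : 0 < Real.Gamma (x + R) := Real.Gamma_pos_of_pos (by positivity)
  have hΓ : 0 < Real.Gamma R := Real.Gamma_pos_of_pos hR
  have hq : 0 < 1 - p := by linarith
  unfold nbinPMFval
  positivity

theorem nbinPMFval_succ (hR : 0 < R) (n : ℕ) :
    nbinPMFval R p (n + 1) = (n + R) / (n + 1) * (1 - p) * nbinPMFval R p n := by
  have hf : (n.factorial : ℝ) ≠ 0 := by positivity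
  unfold nbinPMFval
  rw [Nat.factorial_succ, show ((n + 1 : ℕ) : ℝ) + R = (n + R) + 1 by push_cast; ring,
    Real.Gamma_add_one (by positivity), pow_succ]
  push_cast
  field_simp

theorem succ_mul_nbinPMFval_succ (hR : 0 < R) (hp0 : 0 < p) (x : ℕ) :
    ((x + 1 : ℕ) : ℝ) * nbinPMFval R p (x + 1) = R * ((1 - p) / p) * nbinPMFval (R + 1) p x := by
  have hΓ : Real.Gamma R ≠ 0 := (Real.Gamma_pos_of_pos hR).ne'
  have hf : (x.factorial : ℝ) ≠ 0 := by positivity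
  unfold nbinPMFval
  rw [Nat.factorial_succ, show ((x + 1 : ℕ) : ℝ) + R = x + (R + 1) by push_cast; ring,
    Real.Gamma_add_one hR.ne', Real.rpow_add hp0, Real.rpow_one]
  push_cast
  field_simp
  ring

theorem descFactorial_mul_nbinPMFval (hR : 0 < R) (hp0 : 0 < p) (q x : ℕ) :
    ((x + q).descFactorial q : ℝ) * nbinPMFval R p (x + q)
      = (∏ i ∈ range q, (R + i)) * ((1 - p) / p) ^ q * nbinPMFval (R + q) p x := by
  induction q generalizing R with
  | zero => simp
  | succ q ih =>
    have hstep := succ_mul_nbinPMFval_succ hR hp0 (x + q)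
    have hrec := ih (R := R + 1) (by positivity)
    have hprod : ∏ i ∈ range (q + 1), (R + i) = R * ∏ i ∈ range q, (R + 1 + i) := by
      rw [prod_range_succ', mul_comm]
      push_cast
      simp only [add_zero, add_assoc, add_comm (1 : ℝ)]
    calc ((x + (q + 1)).descFactorial (q + 1) : ℝ) * nbinPMFval R p (x + (q + 1))
        = ((x + q).descFactorial q : ℝ) * (((x + q + 1 : ℕ) : ℝ) * nbinPMFval R p (x + q + 1)) := by
          rw [← add_assoc, Nat.succ_descFactorial_succ, Nat.cast_mul]; ring
      _ = R * ((1 - p) / p) * (((x + q).descFactorial q : ℝ) * nbinPMFval (R + 1) p (x + q)) := by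
          rw [hstep]; ring
      _ = _ := by
          rw [hrec, hprod, pow_succ, Nat.cast_succ, ← add_assoc, add_right_comm R]; ring

theorem pow_mul_nbinPMFval_le (hR : 0 < R) (hp0 : 0 < p) (hp1 : p < 1) (q x : ℕ) :
    ((x + q : ℕ) : ℝ) ^ q * nbinPMFval R p (x + q)
      ≤ 2 ^ (q * (q - 1) / 2) * (∏ i ∈ range q, (R + i)) * ((1 - p) / p) ^ q *
          nbinPMFval (R + q) p x := by
  have hpow : ((x + q : ℕ) : ℝ) ^ q ≤ 2 ^ (q * (q - 1) / 2) * ((x + q).descFactorial q : ℝ) := by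
    exact_mod_cast Nat.pow_le_two_pow_mul_descFactorial (Nat.le_add_left q x)
  calc ((x + q : ℕ) : ℝ) ^ q * nbinPMFval R p (x + q)
      ≤ 2 ^ (q * (q - 1) / 2) * ((x + q).descFactorial q : ℝ) * nbinPMFval R p (x + q) :=
        mul_le_mul_of_nonneg_right hpow (nbinPMFval_pos hR hp0 hp1 _).le
    _ = _ := by rw [mul_assoc, descFactorial_mul_nbinPMFval hR hp0]; ring

theorem summable_nbinPMFval (hR : 0 < R) (hp0 : 0 < p) (hp1 : p < 1) :
    Summable (nbinPMFval R p) := by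
  refine summable_of_ratio_test_tendsto_lt_one (l := 1 - p) (by linarith)
    (Eventually.of_forall fun n => (nbinPMFval_pos hR hp0 hp1 n).ne') ?_
  have hratio : ∀ n : ℕ, ‖nbinPMFval R p (n + 1)‖ / ‖nbinPMFval R p n‖
      = (R + 1 * n) / (1 + 1 * n) * (1 - p) := by
    intro n
    rw [Real.norm_of_nonneg (nbinPMFval_pos hR hp0 hp1 _).le,
      Real.norm_of_nonneg (nbinPMFval_pos hR hp0 hp1 _).le, nbinPMFval_succ hR,
      mul_div_assoc, div_self (nbinPMFval_pos hR hp0 hp1 n).ne', mul_one]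
    ring_nf
  simp only [hratio]
  simpa using (tendsto_add_mul_div_add_mul_atTop_nhds R 1 1 one_ne_zero).mul_const (1 - p)

end NegativeBinomial

theorem tsum_add_eq_tsum_ite {α : Type*} [AddCommMonoid α] [TopologicalSpace α] {f : ℕ → α}
    (m : ℕ) :
    ∑' n, f (n + m) = ∑' n, if m ≤ n then f n else 0 := by
  have hsupp : Function.support (fun n => if m ≤ n then f n else 0) ⊆ Set.range (· + m) := by
    intro n hn
    have hmn : m ≤ n := by_contra fun h => hn (if_neg h)
    exact ⟨n - m, Nat.sub_add_cancel hmn⟩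
  rw [← (add_left_injective m).tsum_eq hsupp]
  simp

theorem stmt11_general (R p : ℝ) (hR : 0 < R) (hp0 : 0 < p) (hp1 : p < 1)
    (q M0 : ℕ) (hM0 : (q : ℤ) - 2 ≤ (M0 : ℤ)) :
    ∑' x : ℕ, ((M0 + 2 + x : ℕ) : ℝ) ^ q * nbinPMFval R p (M0 + 2 + x)
      ≤ 2 ^ (q * (q - 1) / 2) * (∏ i ∈ Finset.range q, (R + i)) * ((1 - p) / p) ^ q *
        ∑' x : ℕ, if (M0 : ℤ) + 1 - (q : ℤ) < (x : ℤ) then nbinPMFval (R + q) p x else 0 := by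
  set m := M0 + 2 - q
  have hindex : ∀ x, M0 + 2 + x = x + m + q := by omega
  have hcond : ∀ x : ℕ, (M0 : ℤ) + 1 - q < x ↔ m ≤ x := by omega
  set C : ℝ := 2 ^ (q * (q - 1) / 2) * (∏ i ∈ range q, (R + i)) * ((1 - p) / p) ^ q
  have hbound : ∀ x, ((M0 + 2 + x : ℕ) : ℝ) ^ q * nbinPMFval R p (M0 + 2 + x)
      ≤ C * nbinPMFval (R + q) p (x + m) := fun x => by
    rw [hindex]; exact pow_mul_nbinPMFval_le hR hp0 hp1 q (x + m)
  have hnonneg : ∀ x, 0 ≤ ((M0 + 2 + x : ℕ) : ℝ) ^ q * nbinPMFval R p (M0 + 2 + x) := fun x =>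
    mul_nonneg (by positivity) (nbinPMFval_pos hR hp0 hp1 _).le
  have htail : Summable fun x => C * nbinPMFval (R + q) p (x + m) :=
    ((summable_nbinPMFval (by positivity) hp0 hp1).comp_injective (add_left_injective m)).mul_left C
  calc _ ≤ ∑' x, C * nbinPMFval (R + q) p (x + m) :=
        (htail.of_nonneg_of_le hnonneg hbound).tsum_le_tsum hbound htail
    _ = _ := by rw [tsum_mul_left, tsum_add_eq_tsum_ite]; simp_rw [hcond]

theorem stmt11 (R p : ℝ) (hR : 0 < R) (hp0 : 0 < p) (hp1 : p < 1)
    (q M0 : ℕ) (hq : 1 ≤ q) (hM0 : (q : ℤ) - 2 ≤ (M0 : ℤ)) :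
    ∑' x : ℕ, ((M0 + 2 + x : ℕ) : ℝ) ^ q * nbinPMFval R p (M0 + 2 + x)
      ≤ 2 ^ (q * (q - 1) / 2) * (∏ i ∈ Finset.range q, (R + i)) * ((1 - p) / p) ^ q *
        ∑' x : ℕ, if (M0 : ℤ) + 1 - (q : ℤ) < (x : ℤ) then nbinPMFval (R + q) p x else 0 :=
  stmt11_general R p hR hp0 hp1 q M0 hM0
end

section
/- If (X_1,...,X_n) has the MVG distribution with parameters \theta_I, \emptyset \ne I \subseteq {1,...,n}, then for every nonempty subset {l_1,...,l_s} \subseteq {1,...,n}, the subvector (X_{l_1},...,X_{l_s}) has the MVG distribution with parameters \hat\theta_I = \prod_{\tilde I \subseteq {1,...,n} \setminus {l_1,...,l_s}} \theta_{I \cup \tilde I} for nonempty I \subseteq {l_1,...,l_s} (the product including \tilde I = \emptyset). -/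
/-!
`X_l > k_l` for all `l ∈ L` exactly when every `M_I` is at least `max_{l ∈ I ∩ L} (k_l + 1)`.
By independence and the geometric tails this has probability
`∏_I θ_I ^ max_{l ∈ I ∩ L} (k_l + 1)`. Splitting each `I` as `A ∪ J` with `A = I ∩ L` and
`J = I \ L` groups the factors into `θ̂_A = ∏_J θ_{A ∪ J}`; the sets `I` missing `L` get
exponent `0`.
-/

open MeasureTheory ProbabilityTheory
open scoped ENNReal

/-- The components of a multivariate geometric (MVG) vector: `X_i = min {M_I : I ∋ i}`. -/
noncomputable def mvgX {Ω : Type*} {n : ℕ}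
    (M : {I : Finset (Fin n) // I.Nonempty} → Ω → ℕ) (i : Fin n) (ω : Ω) : ℕ :=
  sInf {x | ∃ I : {I : Finset (Fin n) // I.Nonempty}, i ∈ I.1 ∧ M I ω = x}

namespace Finset

theorem prod_powerset_union_of_disjoint {α β : Type*} [DecidableEq α] [CommMonoid β]
    {s t : Finset α} (hst : Disjoint s t) (f : Finset α → β) :
    ∏ I ∈ (s ∪ t).powerset, f I = ∏ A ∈ s.powerset, ∏ J ∈ t.powerset, f (A ∪ J) := by
  rw [← prod_product']
  symm
  refine prod_nbij' (fun p => p.1 ∪ p.2) (fun I => (I ∩ s, I ∩ t)) ?_ ?_ ?_ ?_ (fun _ _ => rfl)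
  · rintro ⟨A, J⟩ h
    simp only [mem_product, mem_powerset] at h ⊢
    exact union_subset_union h.1 h.2
  · intro I hI
    simp only [mem_product, mem_powerset] at hI ⊢
    exact ⟨inter_subset_right, inter_subset_right⟩
  · rintro ⟨A, J⟩ h
    simp only [mem_product, mem_powerset] at h
    obtain ⟨hA, hJ⟩ := h
    have hAt : Disjoint A t := hst.mono_left hA
    have hJs : Disjoint J s := hst.symm.mono_left hJ
    simp [union_inter_distrib_right, inter_eq_left.2 hA, inter_eq_left.2 hJ,
      disjoint_iff_inter_eq_empty.1 hAt, disjoint_iff_inter_eq_empty.1 hJs]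
  · intro I hI
    rw [mem_powerset] at hI
    simp only [← inter_union_distrib_left, inter_eq_left.2 hI]

theorem prod_pow_sup_inter_eq_prod_powerset {α β : Type*} [Fintype α] [DecidableEq α]
    [CommMonoid β] (f : Finset α → β) (e : α → ℕ) (L : Finset α) :
    ∏ I, f I ^ (I ∩ L).sup e = ∏ A ∈ L.powerset, (∏ J ∈ Lᶜ.powerset, f (A ∪ J)) ^ A.sup e := by
  rw [← powerset_univ, ← union_compl L, prod_powerset_union_of_disjoint disjoint_compl_right]
  refine prod_congr rfl fun A hA => ?_
  rw [← prod_pow]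
  refine prod_congr rfl fun J hJ => ?_
  rw [mem_powerset] at hA hJ
  rw [union_inter_distrib_right, inter_eq_left.2 hA,
    disjoint_iff_inter_eq_empty.1 (disjoint_of_subset_left hJ disjoint_compl_left), union_empty]

end Finset

theorem measure_le_eq_pow_of_survival {Ω : Type*} [MeasurableSpace Ω] {μ : Measure Ω}
    [IsProbabilityMeasure μ] {X : Ω → ℕ} {q : ℝ≥0∞}
    (hX : ∀ k : ℕ, μ {ω | k < X ω} = q ^ (k + 1)) (m : ℕ) :
    μ {ω | m ≤ X ω} = q ^ m := by
  cases m with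
  | zero => simp
  | succ k => simpa [Nat.succ_le_iff] using hX k

theorem measure_forall_le_eq_prod_pow {Ω ι : Type*} [MeasurableSpace Ω] {μ : Measure Ω}
    [IsProbabilityMeasure μ] [Fintype ι] {X : ι → Ω → ℕ} (hX : iIndepFun X μ) {q : ι → ℝ≥0∞}
    (hgeo : ∀ i (k : ℕ), μ {ω | k < X i ω} = q i ^ (k + 1)) (m : ι → ℕ) :
    μ {ω | ∀ i, m i ≤ X i ω} = ∏ i, q i ^ m i := by
  have hmeas := hX.meas_iInter (s := fun i => X i ⁻¹' Set.Ici (m i))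
    fun i => ⟨Set.Ici (m i), measurableSet_Ici, rfl⟩
  simp only [Set.preimage, Set.mem_Ici, ← Set.ofPred_forall] at hmeas
  simp only [hmeas, measure_le_eq_pow_of_survival (hgeo _)]

section mvgX

variable {Ω : Type*} {n : ℕ} {M : {I : Finset (Fin n) // I.Nonempty} → Ω → ℕ}

theorem le_mvgX_iff {i : Fin n} {ω : Ω} {m : ℕ} :
    m ≤ mvgX M i ω ↔ ∀ I : {I : Finset (Fin n) // I.Nonempty}, i ∈ I.1 → m ≤ M I ω := by
  have hne : {x | ∃ I : {I : Finset (Fin n) // I.Nonempty}, i ∈ I.1 ∧ M I ω = x}.Nonempty :=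
    ⟨_, ⟨{i}, Finset.singleton_nonempty i⟩, Finset.mem_singleton_self i, rfl⟩
  rw [mvgX, le_csInf_iff' hne]
  simp only [mem_lowerBounds, Set.mem_ofPred_eq, forall_exists_index, and_imp]
  exact ⟨fun h I hi => h _ I hi rfl, fun h _ I hi hx => hx ▸ h I hi⟩

theorem forall_le_mvgX_iff (e : Fin n → ℕ) (L : Finset (Fin n)) (ω : Ω) :
    (∀ i ∈ L, e i ≤ mvgX M i ω) ↔
      ∀ I : {I : Finset (Fin n) // I.Nonempty}, (I.1 ∩ L).sup e ≤ M I ω := by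
  simp only [le_mvgX_iff, Finset.sup_le_iff, Finset.mem_inter]
  exact ⟨fun h I i hi => h i hi.2 I hi.1, fun h i hi I hiI => h I i ⟨hiI, hi⟩⟩

end mvgX

theorem stmt15_general {Ω : Type*} [MeasurableSpace Ω] (μ : Measure Ω) [IsProbabilityMeasure μ]
    {n : ℕ} (θ : Finset (Fin n) → ℝ≥0∞)
    (M : {I : Finset (Fin n) // I.Nonempty} → Ω → ℕ)
    (hindep : iIndepFun M μ)
    (hgeo : ∀ (I : {I : Finset (Fin n) // I.Nonempty}) (k : ℕ),
      μ {ω | k < M I ω} = θ I.1 ^ (k + 1))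
    (L : Finset (Fin n))
    (k : Fin n → ℤ) :
    μ {ω | ∀ i ∈ L, k i < (mvgX M i ω : ℤ)}
      = ∏ I ∈ Finset.univ.powerset.filter (fun I : Finset (Fin n) => I ⊆ L ∧ I.Nonempty),
          (∏ J ∈ ((Finset.univ : Finset (Fin n)) \ L).powerset, θ (I ∪ J))
            ^ (I.sup fun i => (k i + 1).toNat) := by
  set e : Fin n → ℕ := fun i => (k i + 1).toNat
  have hevent : {ω | ∀ i ∈ L, k i < (mvgX M i ω : ℤ)}
      = {ω | ∀ I : {I : Finset (Fin n) // I.Nonempty}, (I.1 ∩ L).sup e ≤ M I ω} := by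
    ext ω
    simp only [Set.mem_ofPred_eq, Int.lt_iff_add_one_le, ← Int.toNat_le]
    exact forall_le_mvgX_iff e L ω
  rw [hevent, measure_forall_le_eq_prod_pow hindep hgeo,
    ← Finset.prod_subtype {I | I.Nonempty} (by simp) (fun I => θ I ^ (I ∩ L).sup e),
    Finset.prod_filter_of_ne fun I _ hI =>
      Finset.nonempty_iff_ne_empty.2 (by rintro rfl; simp at hI),
    Finset.prod_pow_sup_inter_eq_prod_powerset, ← Finset.compl_eq_univ_sdiff]
  rw [← Finset.prod_filter_of_ne (p := Finset.Nonempty)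
    fun A _ hA => Finset.nonempty_iff_ne_empty.2 (by rintro rfl; simp at hA)]
  refine Finset.prod_congr ?_ fun _ _ => rfl
  ext A
  simp

/-- The subvector `(X_l)_{l ∈ L}` of an MVG vector is MVG with parameters
`θ̂_I = ∏_{Ĩ ⊆ {1,...,n} \ L} θ_{I ∪ Ĩ}` for `∅ ≠ I ⊆ L`: its joint survival function
has the corresponding MVG product form. -/
theorem stmt15 {Ω : Type*} [MeasurableSpace Ω] (μ : Measure Ω) [IsProbabilityMeasure μ]
    {n : ℕ} (θ : Finset (Fin n) → ℝ≥0∞) (hθ : ∀ I, θ I ≤ 1)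
    (M : {I : Finset (Fin n) // I.Nonempty} → Ω → ℕ)
    (hM : ∀ I, Measurable (M I))
    (hindep : iIndepFun M μ)
    (hgeo : ∀ (I : {I : Finset (Fin n) // I.Nonempty}) (k : ℕ),
      μ {ω | k < M I ω} = θ I.1 ^ (k + 1))
    (hnondef : ∀ i : Fin n, ∃ I : Finset (Fin n), i ∈ I ∧ θ I < 1)
    (L : Finset (Fin n)) (hL : L.Nonempty)
    (k : Fin n → ℤ) (hk : ∀ i, -1 ≤ k i) :
    μ {ω | ∀ i ∈ L, k i < (mvgX M i ω : ℤ)}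
      = ∏ I ∈ Finset.univ.powerset.filter (fun I : Finset (Fin n) => I ⊆ L ∧ I.Nonempty),
          (∏ J ∈ ((Finset.univ : Finset (Fin n)) \ L).powerset, θ (I ∪ J))
            ^ (I.sup fun i => (k i + 1).toNat) :=
  stmt15_general μ θ M hindep hgeo L k
end

section
/- Let (X_1,...,X_n) have the MVG distribution with parameters \theta_I and let {l_1,...,l_s} be a nonempty subset of {1,...,n}. Then min(X_{l_1},...,X_{l_s}) is geometric with parameter 1 - \theta, where \theta = \prod_{I \subseteq {1,...,n}, I \cap {l_1,...,l_s} \ne \emptyset} \theta_I, and consequently its p-th factorial moment equals p! (\theta/(1-\theta))^p for every positive integer p (assuming \theta < 1). -/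
open MeasureTheory ProbabilityTheory
open scoped ENNReal

namespace ENNReal

lemma tsum_choose_mul_pow (p : ℕ) {x : ℝ≥0∞} (hx : x < 1) :
    ∑' m : ℕ, ((m + p).choose p : ℝ≥0∞) * x ^ m = ((1 - x) ^ (p + 1))⁻¹ := by
  have hx_top : x ≠ ∞ := hx.ne_top
  have hr : x.toReal < 1 := by simpa using (toReal_lt_toReal hx_top one_ne_top).2 hx
  have hsum := hasSum_choose_mul_geometric_of_norm_lt_one p
    (by rwa [Real.norm_eq_abs, abs_of_nonneg toReal_nonneg])
  have hofReal := ofReal_tsum_of_nonneg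
    (fun m => mul_nonneg (Nat.cast_nonneg _) (pow_nonneg toReal_nonneg m)) hsum.summable
  simp only [hsum.tsum_eq, ofReal_mul (Nat.cast_nonneg _), ofReal_pow toReal_nonneg,
    ofReal_toReal hx_top, ofReal_natCast] at hofReal
  rw [← hofReal, one_div, ofReal_inv_of_pos (pow_pos (by linarith) _),
    ofReal_pow (by linarith), ofReal_sub _ toReal_nonneg, ofReal_toReal hx_top, ofReal_one]

lemma tsum_descFactorial_mul_pow (p : ℕ) {x : ℝ≥0∞} (hx : x < 1) :
    ∑' y : ℕ, (y.descFactorial p : ℝ≥0∞) * x ^ y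
      = p.factorial * x ^ p * ((1 - x) ^ (p + 1))⁻¹ := by
  have hshift : ∑' y : ℕ, (y.descFactorial p : ℝ≥0∞) * x ^ y
      = ∑' m : ℕ, ((m + p).descFactorial p : ℝ≥0∞) * x ^ (m + p) := by
    refine ((add_left_injective p).tsum_eq fun y hy => ?_).symm
    have hpy : p ≤ y := by
      by_contra! hyp
      simp [Nat.descFactorial_eq_zero_iff_lt.2 hyp] at hy
    exact ⟨y - p, Nat.sub_add_cancel hpy⟩
  rw [hshift, ← tsum_choose_mul_pow p hx, ← ENNReal.tsum_mul_left]
  congr 1 with m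
  rw [Nat.descFactorial_eq_factorial_mul_choose, pow_add]
  push_cast
  ring

end ENNReal

section GeometricTail

variable {Ω : Type*} [MeasurableSpace Ω] {μ : Measure Ω} {Y : Ω → ℕ} {x : ℝ≥0∞}

lemma measure_le_of_measure_lt [IsProbabilityMeasure μ]
    (htail : ∀ k : ℕ, μ {ω | k < Y ω} = x ^ (k + 1)) (y : ℕ) :
    μ {ω | y ≤ Y ω} = x ^ y := by
  cases y with
  | zero => simp
  | succ k => exact htail k

lemma measure_eq_of_measure_lt [IsProbabilityMeasure μ] (hY : Measurable Y)
    (htail : ∀ k : ℕ, μ {ω | k < Y ω} = x ^ (k + 1)) (y : ℕ) :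
    μ {ω | Y ω = y} = x ^ y * (1 - x) := by
  have hx_top : x ≠ ∞ := by
    simpa [htail 0] using (measure_ne_top μ {ω | 0 < Y ω})
  have hunion : {ω | y ≤ Y ω} = {ω | Y ω = y} ∪ {ω | y < Y ω} := by
    ext ω
    exact (le_iff_eq_or_lt (a := y)).trans (or_congr_left eq_comm)
  have hsplit : μ {ω | Y ω = y} + x ^ (y + 1) = x ^ y := by
    rw [← htail, ← measure_le_of_measure_lt htail, hunion]
    exact (measure_union (Set.disjoint_left.2 fun ω (h₁ : Y ω = y) (h₂ : y < Y ω) => h₂.ne' h₁)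
      (hY measurableSet_Ioi)).symm
  rw [ENNReal.eq_sub_of_add_eq (ENNReal.pow_ne_top hx_top) hsplit, pow_succ,
    ENNReal.mul_sub fun _ _ => ENNReal.pow_ne_top hx_top, mul_one]

lemma lintegral_descFactorial_of_measure_lt [IsProbabilityMeasure μ] (hY : Measurable Y)
    (htail : ∀ k : ℕ, μ {ω | k < Y ω} = x ^ (k + 1)) (hx : x < 1) (p : ℕ) :
    ∫⁻ ω, ((Y ω).descFactorial p : ℝ≥0∞) ∂μ = p.factorial * (x / (1 - x)) ^ p := by
  have hne : 1 - x ≠ 0 := (tsub_pos_of_lt hx).ne'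
  have hne_top : 1 - x ≠ ∞ := ENNReal.sub_ne_top ENNReal.one_ne_top
  rw [← lintegral_map (f := fun y : ℕ => (y.descFactorial p : ℝ≥0∞)) (measurable_of_countable _)
    hY, lintegral_countable']
  simp only [Measure.map_apply hY (measurableSet_singleton _), Set.preimage, Set.mem_singleton_iff,
    measure_eq_of_measure_lt hY htail, ← mul_assoc]
  rw [ENNReal.tsum_mul_right, ENNReal.tsum_descFactorial_mul_pow p hx, pow_succ,
    ENNReal.mul_inv (.inr hne_top) (.inr hne), mul_assoc _ _ (1 - x), mul_assoc _ _ (1 - x),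
    ENNReal.inv_mul_cancel hne hne_top, mul_one, mul_assoc, div_eq_mul_inv, mul_pow,
    ENNReal.inv_pow]

end GeometricTail

section MVG

variable {Ω : Type*} {n : ℕ} (M : {I : Finset (Fin n) // I.Nonempty} → Ω → ℕ)

def shocksMeeting (L : Finset (Fin n)) : Finset {I : Finset (Fin n) // I.Nonempty} :=
  Finset.univ.filter fun I => (I.1 ∩ L).Nonempty

lemma lt_mvgX_iff {k : ℕ} {i : Fin n} {ω : Ω} :
    k < mvgX M i ω ↔ ∀ I : {I : Finset (Fin n) // I.Nonempty}, i ∈ I.1 → k < M I ω := by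
  have hne : {x | ∃ I : {I : Finset (Fin n) // I.Nonempty}, i ∈ I.1 ∧ M I ω = x}.Nonempty :=
    ⟨_, ⟨{i}, Finset.singleton_nonempty i⟩, Finset.mem_singleton_self i, rfl⟩
  rw [mvgX, Nat.lt_iff_add_one_le, le_csInf_iff'' hne]
  aesop

lemma lt_inf'_mvgX_iff {L : Finset (Fin n)} (hL : L.Nonempty) {k : ℕ} {ω : Ω} :
    k < L.inf' hL (fun i => mvgX M i ω) ↔ ∀ I ∈ shocksMeeting L, k < M I ω := by
  rw [Finset.lt_inf'_iff]
  constructor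
  · intro h I hI
    obtain ⟨i, hi⟩ := (Finset.mem_filter.1 hI).2
    exact (lt_mvgX_iff M).1 (h i (Finset.mem_inter.1 hi).2) I (Finset.mem_inter.1 hi).1
  · intro h i hiL
    exact (lt_mvgX_iff M).2 fun I hiI =>
      h I (Finset.mem_filter.2 ⟨Finset.mem_univ I, i, Finset.mem_inter.2 ⟨hiI, hiL⟩⟩)

lemma setOf_lt_inf'_mvgX {L : Finset (Fin n)} (hL : L.Nonempty) (k : ℕ) :
    {ω | k < L.inf' hL (fun i => mvgX M i ω)} = ⋂ I ∈ shocksMeeting L, {ω | k < M I ω} := by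
  ext ω
  simp only [Set.mem_iInter₂]
  exact lt_inf'_mvgX_iff M hL

lemma measurable_inf'_mvgX [MeasurableSpace Ω] (hM : ∀ I, Measurable (M I)) {L : Finset (Fin n)}
    (hL : L.Nonempty) : Measurable fun ω => L.inf' hL (fun i => mvgX M i ω) :=
  measurable_of_Ioi fun k => by
    change MeasurableSet {ω | k < _}
    rw [setOf_lt_inf'_mvgX]
    exact Finset.measurableSet_biInter _ fun I _ => hM I measurableSet_Ioi

lemma prod_shocksMeeting {β : Type*} [CommMonoid β] (f : Finset (Fin n) → β) (L : Finset (Fin n)) :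
    ∏ I ∈ shocksMeeting L, f I.1
      = ∏ I ∈ Finset.univ.powerset.filter (fun I : Finset (Fin n) => (I ∩ L).Nonempty), f I := by
  refine Finset.prod_bij (fun I _ => I.1) (by simp [shocksMeeting]) (fun _ _ _ _ => Subtype.ext)
    (fun I hI => ?_) (fun _ _ => rfl)
  have hIL : (I ∩ L).Nonempty := (Finset.mem_filter.1 hI).2
  exact ⟨⟨I, hIL.mono Finset.inter_subset_left⟩, by simpa [shocksMeeting] using hIL, rfl⟩

end MVG

theorem stmt16_general {Ω : Type*} [MeasurableSpace Ω] (μ : Measure Ω) [IsProbabilityMeasure μ]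
    {n : ℕ} (θ : Finset (Fin n) → ℝ≥0∞)
    (M : {I : Finset (Fin n) // I.Nonempty} → Ω → ℕ)
    (hM : ∀ I, Measurable (M I))
    (hindep : iIndepFun M μ)
    (hgeo : ∀ (I : {I : Finset (Fin n) // I.Nonempty}) (k : ℕ),
      μ {ω | k < M I ω} = θ I.1 ^ (k + 1))
    (L : Finset (Fin n)) (hL : L.Nonempty) :
    (∀ k : ℕ,
      μ {ω | k < L.inf' hL fun i => mvgX M i ω}
        = (∏ I ∈ Finset.univ.powerset.filter
              (fun I : Finset (Fin n) => (I ∩ L).Nonempty), θ I) ^ (k + 1))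
    ∧ ((∏ I ∈ Finset.univ.powerset.filter
            (fun I : Finset (Fin n) => (I ∩ L).Nonempty), θ I) < 1 →
        ∀ p : ℕ, 1 ≤ p →
          ∫⁻ ω, (((∏ j ∈ Finset.range p, ((L.inf' hL fun i => mvgX M i ω) - j)) : ℕ) : ℝ≥0∞) ∂μ
            = (p.factorial : ℝ≥0∞) *
              ((∏ I ∈ Finset.univ.powerset.filter
                  (fun I : Finset (Fin n) => (I ∩ L).Nonempty), θ I) /
               (1 - ∏ I ∈ Finset.univ.powerset.filter
                  (fun I : Finset (Fin n) => (I ∩ L).Nonempty), θ I)) ^ p) := by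
  have htail : ∀ k : ℕ, μ {ω | k < L.inf' hL fun i => mvgX M i ω}
      = (∏ I ∈ Finset.univ.powerset.filter
          (fun I : Finset (Fin n) => (I ∩ L).Nonempty), θ I) ^ (k + 1) := fun k => by
    rw [setOf_lt_inf'_mvgX, hindep.meas_biInter (s := fun I => {ω | k < M I ω})
      fun I _ => ⟨Set.Ioi k, measurableSet_Ioi, rfl⟩,
      Finset.prod_congr rfl fun I _ => hgeo I k, Finset.prod_pow, prod_shocksMeeting]
  refine ⟨htail, fun hθ_lt p _ => ?_⟩
  simp only [← Nat.descFactorial_eq_prod_range]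
  exact lintegral_descFactorial_of_measure_lt (measurable_inf'_mvgX M hM hL) htail hθ_lt p

/-- `min(X_{l_1},...,X_{l_s})` is geometric with parameter `1 - θ` where
`θ = ∏_{I : I ∩ L ≠ ∅} θ_I`; consequently its `p`-th factorial moment is
`p! (θ/(1-θ))^p` (assuming `θ < 1`). -/
theorem stmt16 {Ω : Type*} [MeasurableSpace Ω] (μ : Measure Ω) [IsProbabilityMeasure μ]
    {n : ℕ} (θ : Finset (Fin n) → ℝ≥0∞) (hθ : ∀ I, θ I ≤ 1)
    (M : {I : Finset (Fin n) // I.Nonempty} → Ω → ℕ)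
    (hM : ∀ I, Measurable (M I))
    (hindep : iIndepFun M μ)
    (hgeo : ∀ (I : {I : Finset (Fin n) // I.Nonempty}) (k : ℕ),
      μ {ω | k < M I ω} = θ I.1 ^ (k + 1))
    (hnondef : ∀ i : Fin n, ∃ I : Finset (Fin n), i ∈ I ∧ θ I < 1)
    (L : Finset (Fin n)) (hL : L.Nonempty) :
    (∀ k : ℕ,
      μ {ω | k < L.inf' hL fun i => mvgX M i ω}
        = (∏ I ∈ Finset.univ.powerset.filter
              (fun I : Finset (Fin n) => (I ∩ L).Nonempty), θ I) ^ (k + 1))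
    ∧ ((∏ I ∈ Finset.univ.powerset.filter
            (fun I : Finset (Fin n) => (I ∩ L).Nonempty), θ I) < 1 →
        ∀ p : ℕ, 1 ≤ p →
          ∫⁻ ω, (((∏ j ∈ Finset.range p, ((L.inf' hL fun i => mvgX M i ω) - j)) : ℕ) : ℝ≥0∞) ∂μ
            = (p.factorial : ℝ≥0∞) *
              ((∏ I ∈ Finset.univ.powerset.filter
                  (fun I : Finset (Fin n) => (I ∩ L).Nonempty), θ I) /
               (1 - ∏ I ∈ Finset.univ.powerset.filter
                  (fun I : Finset (Fin n) => (I ∩ L).Nonempty), θ I)) ^ p) :=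
  stmt16_general μ θ M hM hindep hgeo L hL
end

section
/- Let X_1,...,X_n be random variables with any joint distribution and 1 \le r \le n. Then for all x, F_{r:n}(x) = \sum_{j=0}^{r-1} (-1)^{r-1-j} \binom{n-j-1}{n-r} \sum_{S \subseteq {1,...,n}, |S| = n-j} F_{1:S}(x), where F_{r:n} is the CDF of the r-th order statistic and F_{1:S} is the CDF of min{X_i : i \in S}. -/
/-! For a fixed outcome `ω`, let `A` be the set of indices `i` with `ω ∈ E i`. A `k`-set `S`
meets `A` unless it lies in the complement of `A`, so `C(n, k) - C(n - |A|, k)` of them do. Hence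
both sides are integrals of indicator combinations, and the claim reduces pointwise to the identity
`∑_{q<r} (-1)^q C(a+q, a) C(m, a+q+1) = [a < m]` for `m ≤ a + r`, used with `a = n - r` and
`m ∈ {n, n - |A|}`. That identity follows by induction on `m` via Pascal's rule from the inversion
formula `∑_q (-1)^q C(a+q, a) C(m, a+q) = [m = a]`. -/

open MeasureTheory Finset

theorem Int.alternating_sum_range_choose_of_lt {k N : ℕ} (h : k < N) :
    ∑ q ∈ Finset.range N, ((-1) ^ q * k.choose q : ℤ) = if k = 0 then 1 else 0 := by
  rw [← Int.alternating_sum_range_choose]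
  refine (sum_subset (range_subset_range.2 h) fun q _ hq => ?_).symm
  rw [Nat.choose_eq_zero_of_lt (by simpa using hq), Nat.cast_zero, mul_zero]

theorem Int.alternating_sum_range_add_choose_mul_choose {a m N : ℕ} (h : m < a + N) :
    ∑ q ∈ Finset.range N, ((-1) ^ q * (a + q).choose a * m.choose (a + q) : ℤ)
      = if m = a then 1 else 0 := by
  have factor : ∀ q, ((-1) ^ q * (a + q).choose a * m.choose (a + q) : ℤ)
      = m.choose a * ((-1) ^ q * (m - a).choose q) := fun q => by
    have := Nat.choose_mul (n := m) (k := a + q) (s := a) le_self_add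
    rw [Nat.add_sub_cancel_left] at this
    rw [mul_assoc, ← Nat.cast_mul, mul_comm ((a + q).choose a), this, Nat.cast_mul, mul_left_comm]
  simp only [factor, ← mul_sum]
  rcases lt_or_ge m a with hma | ham
  · rw [Nat.choose_eq_zero_of_lt hma, if_neg hma.ne, Nat.cast_zero, zero_mul]
  · rw [Int.alternating_sum_range_choose_of_lt (by omega)]
    rcases eq_or_ne m a with rfl | hne
    · simp
    · rw [if_neg (by omega), if_neg hne, mul_zero]

theorem Int.alternating_sum_range_add_choose_mul_choose_succ {a m N : ℕ} (h : m ≤ a + N) :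
    ∑ q ∈ Finset.range N, ((-1) ^ q * (a + q).choose a * m.choose (a + q + 1) : ℤ)
      = if a < m then 1 else 0 := by
  induction m with
  | zero => simp
  | succ m ih =>
    simp only [Nat.choose_succ_succ', Nat.cast_add, mul_add, sum_add_distrib,
      Int.alternating_sum_range_add_choose_mul_choose (by omega : m < a + N), ih (by omega)]
    split_ifs <;> omega

theorem Int.sum_range_neg_one_pow_mul_choose_mul_choose {n r m : ℕ} (hrn : r ≤ n) (hm : m ≤ n) :
    ∑ j ∈ Finset.range r, ((-1) ^ (r - 1 - j) * (n - j - 1).choose (n - r) * m.choose (n - j) : ℤ)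
      = if n - r < m then 1 else 0 := by
  rw [← sum_range_reflect,
    ← Int.alternating_sum_range_add_choose_mul_choose_succ (N := r) (by omega)]
  refine sum_congr rfl fun q hq => ?_
  have hq : q < r := mem_range.1 hq
  rw [show r - 1 - (r - 1 - q) = q by omega, show n - (r - 1 - q) - 1 = n - r + q by omega,
    show n - (r - 1 - q) = n - r + q + 1 by omega]

theorem Finset.card_powersetCard_filter_disjoint {ι : Type*} [Fintype ι] [DecidableEq ι]
    (k : ℕ) (A : Finset ι) :
    #{S ∈ powersetCard k (univ : Finset ι) | Disjoint S A} = (Fintype.card ι - #A).choose k := by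
  have : {S ∈ powersetCard k (univ : Finset ι) | Disjoint S A} = powersetCard k Aᶜ := by
    ext S
    simp [← subset_compl_iff_disjoint_right, and_comm]
  rw [this, card_powersetCard, card_compl]

theorem sum_range_neg_one_pow_mul_choose_mul_card_not_disjoint {ι : Type*} [Fintype ι]
    [DecidableEq ι] (A : Finset ι) {r : ℕ} (hr : 1 ≤ r) (hrn : r ≤ Fintype.card ι) :
    ∑ j ∈ range r, ((-1) ^ (r - 1 - j) * (Fintype.card ι - j - 1).choose (Fintype.card ι - r) *
        #{S ∈ powersetCard (Fintype.card ι - j) (univ : Finset ι) | ¬Disjoint S A} : ℤ)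
      = if r ≤ #A then 1 else 0 := by
  set n := Fintype.card ι
  have count : ∀ k, (#{S ∈ powersetCard k (univ : Finset ι) | ¬Disjoint S A} : ℤ)
      = n.choose k - (n - #A).choose k := fun k => by
    rw [← card_powersetCard_filter_disjoint, eq_sub_iff_add_eq, ← Nat.cast_add, add_comm,
      card_filter_add_card_filter_not, card_powersetCard, card_univ]
  have hA : #A ≤ n := card_le_univ A
  simp only [count, mul_sub, sum_sub_distrib]
  rw [Int.sum_range_neg_one_pow_mul_choose_mul_choose hrn le_rfl,
    Int.sum_range_neg_one_pow_mul_choose_mul_choose hrn (Nat.sub_le n #A)]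
  split_ifs <;> omega

theorem measureReal_le_card_mem_eq_sum_measureReal_biUnion {Ω ι : Type*} [MeasurableSpace Ω]
    (μ : Measure Ω) [IsFiniteMeasure μ] [Fintype ι] (E : ι → Set Ω) [∀ i, DecidablePred (· ∈ E i)]
    (hE : ∀ i, MeasurableSet (E i)) {r : ℕ} (hr : 1 ≤ r) (hrn : r ≤ Fintype.card ι) :
    μ.real {ω | r ≤ #{i | ω ∈ E i}}
      = ∑ j ∈ range r, (-1 : ℝ) ^ (r - 1 - j) *
          (Fintype.card ι - j - 1).choose (Fintype.card ι - r) *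
          ∑ S ∈ powersetCard (Fintype.card ι - j) (univ : Finset ι), μ.real (⋃ i ∈ S, E i) := by
  classical
  have hcount : Measurable fun ω => #{i | ω ∈ E i} := by
    simp only [card_filter]
    exact Finset.measurable_sum _ fun i _ => Measurable.ite (hE i) measurable_const measurable_const
  have hL : MeasurableSet {ω | r ≤ #{i | ω ∈ E i}} := measurableSet_le measurable_const hcount
  have hU : ∀ S : Finset ι, MeasurableSet (⋃ i ∈ S, E i) :=
    fun S => S.measurableSet_biUnion fun i _ => hE i
  have hU_int : ∀ S : Finset ι, Integrable ((⋃ i ∈ S, E i).indicator (1 : Ω → ℝ)) μ :=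
    fun S => (integrable_const 1).indicator (hU S)
  have pointwise : ∀ ω, {ω | r ≤ #{i | ω ∈ E i}}.indicator 1 ω
      = ∑ j ∈ range r, (-1 : ℝ) ^ (r - 1 - j) *
          (Fintype.card ι - j - 1).choose (Fintype.card ι - r) *
          ∑ S ∈ powersetCard (Fintype.card ι - j) (univ : Finset ι),
            (⋃ i ∈ S, E i).indicator 1 ω := fun ω => by
    have := congrArg (Int.cast : ℤ → ℝ)
      (sum_range_neg_one_pow_mul_choose_mul_card_not_disjoint {i | ω ∈ E i} hr hrn)
    push_cast at this
    simp only [Set.indicator_apply, Set.mem_ofPred_eq, Set.mem_iUnion₂, exists_prop, Pi.one_apply,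
      sum_boole]
    simp only [not_disjoint_iff, mem_filter, mem_univ, true_and] at this
    exact this.symm
  calc μ.real {ω | r ≤ #{i | ω ∈ E i}}
      = ∫ ω, {ω | r ≤ #{i | ω ∈ E i}}.indicator 1 ω ∂μ := (integral_indicator_one hL).symm
    _ = _ := by
      simp only [pointwise]
      rw [integral_finsetSum _ fun j _ => (integrable_finsetSum _ fun S _ => hU_int S).const_mul _]
      refine sum_congr rfl fun j _ => ?_
      rw [integral_const_mul, integral_finsetSum _ fun S _ => hU_int S]
      simp only [integral_indicator_one (hU _)]

/-- For arbitrary jointly distributed `X_1,...,X_n`,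
`F_{r:n}(x) = ∑_{j=0}^{r-1} (-1)^{r-1-j} C(n-j-1, n-r) ∑_{|S| = n-j} F_{1:S}(x)`,
where `F_{r:n}(x) = P(at least r of the X_i are ≤ x)` is the CDF of the r-th order
statistic and `F_{1:S}(x) = P(min_{i ∈ S} X_i ≤ x) = P(∃ i ∈ S, X_i ≤ x)`. -/
theorem stmt18 {Ω : Type*} [MeasurableSpace Ω] (μ : Measure Ω) [IsProbabilityMeasure μ]
    {n : ℕ} (X : Fin n → Ω → ℝ) (hX : ∀ i, Measurable (X i))
    (r : ℕ) (hr : 1 ≤ r) (hrn : r ≤ n) (x : ℝ) :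
    (μ {ω | r ≤ (Finset.univ.filter (fun i => X i ω ≤ x)).card}).toReal
      = ∑ j ∈ Finset.range r, (-1 : ℝ) ^ (r - 1 - j) * ((n - j - 1).choose (n - r)) *
          ∑ S ∈ Finset.powersetCard (n - j) (Finset.univ : Finset (Fin n)),
            (μ {ω | ∃ i ∈ S, X i ω ≤ x}).toReal := by
  have h := measureReal_le_card_mem_eq_sum_measureReal_biUnion μ (fun i => {ω | X i ω ≤ x})
    (fun i => measurableSet_le (hX i) measurable_const) hr (by rwa [Fintype.card_fin])
  have hunion : ∀ S : Finset (Fin n), {ω | ∃ i ∈ S, X i ω ≤ x} = ⋃ i ∈ S, {ω | X i ω ≤ x} :=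
    fun S => by ext; simp
  rw [Fintype.card_fin] at h
  simp only [hunion]
  exact h
end
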